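/- Let U be a finite nonempty set, d a metric on U, α > 0, and halt, gen ∈ (0,1). For a true sequence X : Fin n → U and an output sequence S : Fin m → U, define the Sequence-CLDP probability P(X, S) = halt·(1−halt)^m·∏_{i<m} Pr[Φ_EM(X[i]) = S[i]] if m < n; P(X, S) = (1−gen)·(1−halt)^n·∏_{i<n} Pr[Φ_EM(X[i]) = S[i]] if m = n; and P(X, S) = (1−gen)·(1−halt)^n·(gen/|U|)^{m−n}·∏_{i<n} Pr[Φ_EM(X[i]) = S[i]] if m > n. Then Sequence-CLDP satisfies α-content-indistinguishability: for any two true sequences X, Y : Fin n → U of the same length n and any output sequence S : Fin m → U, P(X, S) ≤ exp(α · d_seq(X, Y)) · P(Y, S), where d_seq(X, Y) = Σ_{i < n} d(X[i], Y[i]). -/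

import Mathlib

/-- The probability that the Exponential Mechanism with distance `d` and
privacy parameter `α` outputs `y` on input `v`. -/
noncomputable def EMprob {U : Type*} [Fintype U] (d : U → U → ℝ) (α : ℝ) (v y : U) : ℝ :=
  Real.exp (-α * d v y / 2) / ∑ z, Real.exp (-α * d v z / 2)

/-- The probability that Sequence-CLDP with parameters `halt`, `gen` produces
output sequence `S` (of length `m`) from true sequence `X` (of length `n`):
if `m < n` the mechanism halted after perturbing the first `m` items;
if `m ≥ n` the mechanism perturbed all `n` items and then generated
`m − n` uniformly random items (note `(gen/|U|)^0 = 1` when `m = n`). -/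
noncomputable def seqCldpProb {U : Type*} [Fintype U] (d : U → U → ℝ)
    (α halt gen : ℝ) {n m : ℕ} (X : Fin n → U) (S : Fin m → U) : ℝ :=
  if h : m < n then
    halt * (1 - halt) ^ m * ∏ i : Fin m, EMprob d α (X (Fin.castLE h.le i)) (S i)
  else
    (1 - gen) * (1 - halt) ^ n * (gen / (Fintype.card U : ℝ)) ^ (m - n) *
      ∏ i : Fin n, EMprob d α (X i) (S (Fin.castLE (not_lt.mp h) i))

/-! The weights `halt`, `1 - halt`, `1 - gen` and `gen / |U|` depend on the true sequence only
through its length, so `X` and `Y` differ only in the product of exponential-mechanism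
probabilities. Position by position the mechanism is `exp (α * d (X i) (Y i))`-indistinguishable,
and these factors multiply; when the mechanism halts early only a prefix of the positions enters,
and `d ≥ 0` bounds the partial distance by the full one. -/

section ExponentialMechanism

variable {U : Type*} [Fintype U] (d : U → U → ℝ) {α : ℝ}

lemma EMprob_nonneg (v y : U) : 0 ≤ EMprob d α v y :=
  div_nonneg (Real.exp_pos _).le (Finset.sum_nonneg fun _ _ => (Real.exp_pos _).le)

/-- Moving the input from `x` to `y` changes both the weight of `s` and the normalising sum
by a factor of at most `exp (α * d x y / 2)`. -/
lemma EMprob_le_exp_mul_EMprob (hα : 0 ≤ α) (hd_symm : ∀ x y, d x y = d y x)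
    (hd_tri : ∀ x y z, d x z ≤ d x y + d y z) (x y s : U) :
    EMprob d α x s ≤ Real.exp (α * d x y) * EMprob d α y s := by
  have hZx : 0 < ∑ z, Real.exp (-α * d x z / 2) :=
    Finset.sum_pos (fun _ _ => Real.exp_pos _) ⟨x, Finset.mem_univ x⟩
  have hZy : 0 < ∑ z, Real.exp (-α * d y z / 2) :=
    Finset.sum_pos (fun _ _ => Real.exp_pos _) ⟨y, Finset.mem_univ y⟩
  have h_weight :
      Real.exp (-α * d x s / 2) ≤ Real.exp (α * d x y / 2) * Real.exp (-α * d y s / 2) := by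
    rw [← Real.exp_add, Real.exp_le_exp]
    have := mul_le_mul_of_nonneg_left (hd_tri y x s) hα
    rw [hd_symm y x] at this
    linarith
  have h_partition : ∑ z, Real.exp (-α * d y z / 2) ≤
      Real.exp (α * d x y / 2) * ∑ z, Real.exp (-α * d x z / 2) := by
    rw [Finset.mul_sum]
    refine Finset.sum_le_sum fun z _ => ?_
    rw [← Real.exp_add, Real.exp_le_exp]
    linarith [mul_le_mul_of_nonneg_left (hd_tri x y z) hα]
  have h_exp : Real.exp (α * d x y) = Real.exp (α * d x y / 2) * Real.exp (α * d x y / 2) := by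
    rw [← Real.exp_add, add_halves]
  unfold EMprob
  rw [div_le_iff₀ hZx, h_exp, mul_div_assoc', div_mul_eq_mul_div, le_div_iff₀ hZy]
  calc Real.exp (-α * d x s / 2) * ∑ z, Real.exp (-α * d y z / 2)
      ≤ (Real.exp (α * d x y / 2) * Real.exp (-α * d y s / 2)) *
          (Real.exp (α * d x y / 2) * ∑ z, Real.exp (-α * d x z / 2)) :=
        mul_le_mul h_weight h_partition hZy.le (by positivity)
    _ = _ := by ring

lemma prod_EMprob_le_exp_mul_prod_EMprob (hα : 0 ≤ α) (hd_symm : ∀ x y, d x y = d y x)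
    (hd_tri : ∀ x y z, d x z ≤ d x y + d y z) {k : ℕ} (X Y S : Fin k → U) :
    ∏ i, EMprob d α (X i) (S i)
      ≤ Real.exp (α * ∑ i, d (X i) (Y i)) * ∏ i, EMprob d α (Y i) (S i) := by
  rw [Finset.mul_sum, Real.exp_sum, ← Finset.prod_mul_distrib]
  exact Finset.prod_le_prod (fun _ _ => EMprob_nonneg d _ _)
    fun _ _ => EMprob_le_exp_mul_EMprob d hα hd_symm hd_tri _ _ _

end ExponentialMechanism

lemma Fin.sum_castLE_le_sum {M : Type*} [AddCommMonoid M] [PartialOrder M]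
    [IsOrderedAddMonoid M] {m n : ℕ} (h : m ≤ n) {f : Fin n → M} (hf : ∀ i, 0 ≤ f i) :
    ∑ i : Fin m, f (Fin.castLE h i) ≤ ∑ i, f i :=
  (Finset.sum_map Finset.univ (Fin.castLEEmb h) f).symm.trans_le
    (Finset.sum_le_univ_sum_of_nonneg hf)

theorem seq_cldp_content_indistinguishability_general {U : Type*} [Fintype U]
    (d : U → U → ℝ) (α : ℝ) (hα : 0 < α)
    (hd_nonneg : ∀ x y, 0 ≤ d x y)
    (hd_symm : ∀ x y, d x y = d y x)
    (hd_tri : ∀ x y z, d x z ≤ d x y + d y z)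
    (halt gen : ℝ)
    (hhalt : halt ∈ Set.Ioo (0 : ℝ) 1) (hgen : gen ∈ Set.Ioo (0 : ℝ) 1)
    (n m : ℕ) (X Y : Fin n → U) (S : Fin m → U) :
    seqCldpProb d α halt gen X S
      ≤ Real.exp (α * ∑ i : Fin n, d (X i) (Y i)) * seqCldpProb d α halt gen Y S := by
  have hhalt' : 0 ≤ 1 - halt := sub_nonneg.2 hhalt.2.le
  have hgen' : 0 ≤ 1 - gen := sub_nonneg.2 hgen.2.le
  have hgen₀ := hgen.1.le
  have hhalt₀ := hhalt.1.le
  unfold seqCldpProb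
  split_ifs with h
  · have hprod := prod_EMprob_le_exp_mul_prod_EMprob d hα.le hd_symm hd_tri
      (X ∘ Fin.castLE h.le) (Y ∘ Fin.castLE h.le) S
    have hprefix : Real.exp (α * ∑ i : Fin m, d (X (Fin.castLE h.le i)) (Y (Fin.castLE h.le i)))
        ≤ Real.exp (α * ∑ i, d (X i) (Y i)) := by
      gcongr
      exact Fin.sum_castLE_le_sum h.le fun i => hd_nonneg _ _
    refine (mul_le_mul_of_nonneg_left ?_ (by positivity)).trans_eq (mul_left_comm _ _ _)
    exact hprod.trans (mul_le_mul_of_nonneg_right hprefix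
      (Finset.prod_nonneg fun _ _ => EMprob_nonneg d _ _))
  · have hprod := prod_EMprob_le_exp_mul_prod_EMprob d hα.le hd_symm hd_tri
      X Y (S ∘ Fin.castLE (not_lt.mp h))
    exact (mul_le_mul_of_nonneg_left hprod (by positivity)).trans_eq (mul_left_comm _ _ _)

/-- Sequence-CLDP satisfies α-content-indistinguishability. -/
theorem seq_cldp_content_indistinguishability {U : Type*} [Fintype U] [Nonempty U]
    (d : U → U → ℝ) (α : ℝ) (hα : 0 < α)
    (hd_nonneg : ∀ x y, 0 ≤ d x y)
    (hd_symm : ∀ x y, d x y = d y x)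
    (hd_tri : ∀ x y z, d x z ≤ d x y + d y z)
    (hd_eq : ∀ x y, d x y = 0 ↔ x = y)
    (halt gen : ℝ)
    (hhalt : halt ∈ Set.Ioo (0 : ℝ) 1) (hgen : gen ∈ Set.Ioo (0 : ℝ) 1)
    (n m : ℕ) (X Y : Fin n → U) (S : Fin m → U) :
    seqCldpProb d α halt gen X S
      ≤ Real.exp (α * ∑ i : Fin n, d (X i) (Y i)) * seqCldpProb d α halt gen Y S :=
  seq_cldp_content_indistinguishability_general d α hα hd_nonneg hd_symm hd_tri halt gen hhalt hgen
    n m X Y S
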